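/- arXiv:1902.04419 — 3 statements merged into one kernel-verified Lean document; each statement's English description precedes it below -/
import Mathlib

section
/- For a positive even integer n and a positive even integer m ≤ n, the number of strings x of length n over {A,C,G,T} with GC-content m and satisfying x = x^{rc} is exactly C(n/2, m/2)·2^{n/2}. -/
/-!
A string of length `2k` equal to its reverse complement is determined by its first half `y`:
it is `y` followed by `y^{rc}`. Complementation maps `{C, G}` to itself, so the GC-content of
such a string is twice that of `y`. The count is therefore the number of strings of length `k`
with GC-content `j = m/2`: choose the `j` positions carrying `C` or `G`, then each of the `k`
positions has two possible letters.
-/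

/-- Watson–Crick complement on `{A,C,G,T} = {0,1,2,3}`: swaps `0↔3`, `1↔2`. -/
def dnaCompl (x : Fin 4) : Fin 4 := 3 - x

/-- Reverse-complement of a DNA string. -/
def dnaRC {n : ℕ} (x : Fin n → Fin 4) : Fin n → Fin 4 := fun i => dnaCompl (x i.rev)

/-- GC-content: the number of coordinates equal to `G` or `C` (here `1` or `2`). -/
def gcContent {n : ℕ} (x : Fin n → Fin 4) : ℕ :=
  (Finset.univ.filter (fun i => x i = 1 ∨ x i = 2)).card

open Finset

theorem card_filter_fun_filter_eq {ι α : Type*} [Fintype ι] [DecidableEq ι] [Fintype α]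
    (p : α → Prop) [DecidablePred p] (s : Finset ι) :
    #{f : ι → α | ({i | p (f i)} : Finset ι) = s} =
      #{a | p a} ^ #s * #{a | ¬p a} ^ (Fintype.card ι - #s) := by
  have hpi : ({f : ι → α | ({i | p (f i)} : Finset ι) = s} : Finset (ι → α)) =
      Fintype.piFinset fun i =>
        if i ∈ s then ({a | p a} : Finset α) else ({a | ¬p a} : Finset α) := by
    ext f
    simp only [mem_filter, mem_univ, true_and, Fintype.mem_piFinset, Finset.ext_iff]
    refine forall_congr' fun i => ?_
    split_ifs with h <;> simp [h]
  rw [hpi, Fintype.card_piFinset]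
  simp only [apply_ite card]
  rw [prod_ite, prod_const, prod_const, filter_mem_eq_inter, univ_inter, filter_notMem_eq_sdiff,
    ← compl_eq_univ_sdiff, card_compl]

theorem card_filter_fun_card_filter_eq {ι α : Type*} [Fintype ι] [DecidableEq ι] [Fintype α]
    (p : α → Prop) [DecidablePred p] (j : ℕ) :
    #{f : ι → α | #{i | p (f i)} = j} =
      (Fintype.card ι).choose j * #{a | p a} ^ j * #{a | ¬p a} ^ (Fintype.card ι - j) := by
  set supp : (ι → α) → Finset ι := fun f => {i | p (f i)}
  calc #{f : ι → α | #(supp f) = j}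
      = ∑ s ∈ powersetCard j univ, #{f | supp f = s} := by
        rw [card_eq_sum_card_fiberwise (f := supp) (t := powersetCard j univ)]
        · refine sum_congr rfl fun s hs => ?_
          rw [filter_filter]
          exact congrArg card <| filter_congr fun f _ => by
            rw [← (mem_powersetCard.1 hs).2]; exact and_iff_right_of_imp (congrArg card)
        · intro f hf
          simpa using hf
    _ = ∑ s ∈ powersetCard j univ, #{a | p a} ^ j * #{a | ¬p a} ^ (Fintype.card ι - j) :=
        sum_congr rfl fun s hs => by
          rw [← (mem_powersetCard.1 hs).2]
          exact card_filter_fun_filter_eq p s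
    _ = _ := by rw [sum_const, card_powersetCard, card_univ, smul_eq_mul, mul_assoc]

theorem dnaCompl_dnaCompl (v : Fin 4) : dnaCompl (dnaCompl v) = v := by
  revert v; decide

theorem dnaCompl_eq_one_or_two_iff (v : Fin 4) :
    dnaCompl v = 1 ∨ dnaCompl v = 2 ↔ v = 1 ∨ v = 2 := by
  revert v; decide

theorem dnaRC_dnaRC {n : ℕ} (x : Fin n → Fin 4) : dnaRC (dnaRC x) = x := by
  funext i; simp [dnaRC, dnaCompl_dnaCompl]

theorem dnaRC_append {k : ℕ} (y z : Fin k → Fin 4) :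
    dnaRC (Fin.append y z) = Fin.append (dnaRC z) (dnaRC y) := by
  funext i
  rw [dnaRC, Fin.append_rev]
  induction i using Fin.addCases <;> simp [dnaRC, - Fin.natAdd_eq_addNat]

theorem gcContent_append {m n : ℕ} (y : Fin m → Fin 4) (z : Fin n → Fin 4) :
    gcContent (Fin.append y z) = gcContent y + gcContent z := by
  simp only [gcContent, card_filter, Fin.sum_univ_add, Fin.append_left, Fin.append_right]

theorem gcContent_dnaRC {n : ℕ} (x : Fin n → Fin 4) : gcContent (dnaRC x) = gcContent x := by
  simp only [gcContent, dnaRC, dnaCompl_eq_one_or_two_iff, card_filter]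
  exact Fintype.sum_equiv Fin.revPerm _ _ fun i => rfl

theorem gcContent_append_dnaRC {k : ℕ} (y : Fin k → Fin 4) :
    gcContent (Fin.append y (dnaRC y)) = gcContent y + gcContent y := by
  rw [gcContent_append, gcContent_dnaRC]

theorem eq_dnaRC_iff_exists_append {k : ℕ} (x : Fin (k + k) → Fin 4) :
    x = dnaRC x ↔ ∃ y, x = Fin.append y (dnaRC y) := by
  constructor
  · intro hx
    set y : Fin k → Fin 4 := fun i => x (Fin.castAdd k i)
    set z : Fin k → Fin 4 := fun i => x (Fin.natAdd k i)
    have hyz : x = Fin.append y z := Fin.append_castAdd_natAdd.symm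
    have hz : z = dnaRC y := by
      funext i
      have := congrFun (hyz ▸ hx) (Fin.natAdd k i)
      rwa [dnaRC_append, Fin.append_right, Fin.append_right] at this
    exact ⟨y, hz ▸ hyz⟩
  · rintro ⟨y, rfl⟩
    rw [dnaRC_append, dnaRC_dnaRC]

theorem append_dnaRC_injective (k : ℕ) :
    Function.Injective fun y : Fin k → Fin 4 => Fin.append y (dnaRC y) := by
  intro y y' h
  funext i
  simpa using congrFun h (Fin.castAdd k i)

theorem card_gcContent_eq (k j : ℕ) :
    #{y : Fin k → Fin 4 | gcContent y = j} = k.choose j * 2 ^ k := by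
  have hgc : #{v : Fin 4 | v = 1 ∨ v = 2} = 2 := by decide
  have hat : #{v : Fin 4 | ¬(v = 1 ∨ v = 2)} = 2 := by decide
  unfold gcContent
  rw [card_filter_fun_card_filter_eq (fun v : Fin 4 => v = 1 ∨ v = 2), hgc, hat, Fintype.card_fin]
  rcases le_or_gt j k with hjk | hkj
  · rw [mul_assoc, ← pow_add, Nat.add_sub_cancel' hjk]
  · simp [Nat.choose_eq_zero_of_lt hkj]

theorem card_gcContent_eq_add_self_and_eq_dnaRC (k j : ℕ) :
    #{x : Fin (k + k) → Fin 4 | gcContent x = j + j ∧ x = dnaRC x} = k.choose j * 2 ^ k := by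
  have himage : ({x | gcContent x = j + j ∧ x = dnaRC x} : Finset (Fin (k + k) → Fin 4)) =
      image (fun y => Fin.append y (dnaRC y)) {y | gcContent y = j} := by
    ext x
    simp only [mem_filter, mem_univ, true_and, mem_image, eq_dnaRC_iff_exists_append]
    constructor
    · rintro ⟨hgc, y, rfl⟩
      exact ⟨y, by rw [gcContent_append_dnaRC] at hgc; omega, rfl⟩
    · rintro ⟨y, hgc, rfl⟩
      exact ⟨by rw [gcContent_append_dnaRC, hgc], y, rfl⟩
  rw [himage, card_image_of_injective _ (append_dnaRC_injective k), card_gcContent_eq]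

theorem count_gc_self_rc_general (n m : ℕ) (hne : Even n) (hme : Even m) :
    (Finset.univ.filter
        (fun x : Fin n → Fin 4 => gcContent x = m ∧ x = dnaRC x)).card =
      Nat.choose (n / 2) (m / 2) * 2 ^ (n / 2) := by
  obtain ⟨k, rfl⟩ := hne
  obtain ⟨j, rfl⟩ := hme
  rw [show (k + k) / 2 = k by omega, show (j + j) / 2 = j by omega]
  exact card_gcContent_eq_add_self_and_eq_dnaRC k j

/-- For even `n` and even `m ≤ n`, the number of DNA strings of length `n` with
GC-content `m` equal to their own reverse-complement is `C(n/2, m/2) · 2^(n/2)`. -/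
theorem count_gc_self_rc (n m : ℕ) (hn : 0 < n) (hm : 0 < m) (hmn : m ≤ n)
    (hne : Even n) (hme : Even m) :
    (Finset.univ.filter
        (fun x : Fin n → Fin 4 => gcContent x = m ∧ x = dnaRC x)).card =
      Nat.choose (n / 2) (m / 2) * 2 ^ (n / 2) :=
  count_gc_self_rc_general n m hne hme
end

section
/- For binary strings a and b differing in exactly the two positions i < j, their block encodings u, v under the map f satisfy v_k = u_k for k < i and k ≥ j, and v_k = u_k^c for i ≤ k < j; hence d_H(u,v) = ℓ(j − i). -/
/-- Coordinatewise complement of a DNA block of length `ℓ`. -/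
def blkCompl {ℓ : ℕ} (z : Fin ℓ → Fin 4) : Fin ℓ → Fin 4 := fun i => dnaCompl (z i)

/-- The map `f` of the recursive encoding: `f(x,0)=y`, `f(x,1)=y^c`,
`f(x^c,0)=y^c`, `f(x^c,1)=y`, `f(y,0)=x^c`, `f(y,1)=x`, `f(y^c,0)=x`,
`f(y^c,1)=x^c`. -/
def fmap {ℓ : ℕ} (x y z : Fin ℓ → Fin 4) (c : Bool) : Fin ℓ → Fin 4 :=
  if z = x then (if c then blkCompl y else y)
  else if z = blkCompl x then (if c then y else blkCompl y)
  else if z = y then (if c then x else blkCompl x)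
  else (if c then blkCompl x else x)

/-- The recursive block encoding of a binary string: `u 0 = h(a_1)` with
`h(0) = x`, `h(1) = x^c`, and `u (i+1) = f(u i, a_{i+1})`. -/
def enc {ℓ : ℕ} (x y : Fin ℓ → Fin 4) (a : ℕ → Bool) : ℕ → (Fin ℓ → Fin 4)
  | 0 => if a 0 then blkCompl x else x
  | i + 1 => fmap x y (enc x y a i) (a (i + 1))

lemma dnaCompl_ne (w : Fin 4) : dnaCompl w ≠ w := by fin_cases w <;> decide

lemma dnaCompl_invol (w : Fin 4) : dnaCompl (dnaCompl w) = w := by fin_cases w <;> decide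

lemma blkCompl_invol {ℓ : ℕ} (z : Fin ℓ → Fin 4) : blkCompl (blkCompl z) = z :=
  funext fun i => dnaCompl_invol _

lemma blkCompl_ne {ℓ : ℕ} (hℓ : 0 < ℓ) (z : Fin ℓ → Fin 4) : blkCompl z ≠ z := by
  intro h
  exact dnaCompl_ne (z ⟨0, hℓ⟩) (congrFun h ⟨0, hℓ⟩)

lemma blkCompl_injective {ℓ : ℕ} {u v : Fin ℓ → Fin 4} (h : blkCompl u = blkCompl v) :
    u = v := by
  have := congrArg blkCompl h
  rwa [blkCompl_invol, blkCompl_invol] at this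

lemma enc_mem {ℓ : ℕ} (x y : Fin ℓ → Fin 4) (a : ℕ → Bool) (k : ℕ) :
    enc x y a k = x ∨ enc x y a k = blkCompl x ∨ enc x y a k = y ∨
      enc x y a k = blkCompl y := by
  induction k with
  | zero => cases h : a 0 <;> simp [enc, h]
  | succ k ih =>
    rw [show enc x y a (k+1) = fmap x y (enc x y a k) (a (k+1)) from rfl]
    unfold fmap
    split_ifs <;> tauto

lemma fmap_not {ℓ : ℕ} (x y z : Fin ℓ → Fin 4) (c : Bool) :
    fmap x y z (!c) = blkCompl (fmap x y z c) := by
  unfold fmap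
  cases c <;> split_ifs <;> simp_all [blkCompl_invol]

lemma fmap_x {ℓ : ℕ} (x y : Fin ℓ → Fin 4) (c : Bool) :
    fmap x y x c = if c then blkCompl y else y := by simp [fmap]

lemma fmap_cx {ℓ : ℕ} (x y : Fin ℓ → Fin 4) (h1 : blkCompl x ≠ x) (c : Bool) :
    fmap x y (blkCompl x) c = if c then y else blkCompl y := by simp [fmap, h1]

lemma fmap_y {ℓ : ℕ} (x y : Fin ℓ → Fin 4) (hyx : y ≠ x) (hycx : y ≠ blkCompl x)
    (c : Bool) : fmap x y y c = if c then x else blkCompl x := by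
  simp [fmap, hyx, hycx]

lemma fmap_cy {ℓ : ℕ} (x y : Fin ℓ → Fin 4) (h1 : blkCompl y ≠ x)
    (h2 : blkCompl y ≠ blkCompl x) (h3 : blkCompl y ≠ y) (c : Bool) :
    fmap x y (blkCompl y) c = if c then blkCompl x else x := by
  simp [fmap, h1, h2, h3]

lemma fmap_compl {ℓ : ℕ} (hℓ : 0 < ℓ) (x y z : Fin ℓ → Fin 4)
    (hxy : x ≠ y) (hxyc : x ≠ blkCompl y)
    (hz : z = x ∨ z = blkCompl x ∨ z = y ∨ z = blkCompl y) (c : Bool) :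
    fmap x y (blkCompl z) c = blkCompl (fmap x y z c) := by
  have h1 : blkCompl x ≠ x := blkCompl_ne hℓ x
  have h2 : blkCompl y ≠ y := blkCompl_ne hℓ y
  have h3 : blkCompl x ≠ y := fun h => hxyc (by rw [← h, blkCompl_invol])
  have h4 : blkCompl x ≠ blkCompl y := fun h => hxy (blkCompl_injective h)
  rcases hz with h | h | h | h <;> rw [h]
  · rw [fmap_x, fmap_cx x y h1]
    cases c <;> simp [blkCompl_invol]
  · rw [blkCompl_invol, fmap_x, fmap_cx x y h1]
    cases c <;> simp [blkCompl_invol]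
  · rw [fmap_y x y (Ne.symm hxy) h3.symm, fmap_cy x y (fun h => hxyc h.symm) h4.symm h2]
    cases c <;> simp [blkCompl_invol]
  · rw [blkCompl_invol, fmap_y x y (Ne.symm hxy) h3.symm,
      fmap_cy x y (fun h => hxyc h.symm) h4.symm h2]
    cases c <;> simp [blkCompl_invol]

lemma ham_compl {ℓ : ℕ} (z : Fin ℓ → Fin 4) : hammingDist z (blkCompl z) = ℓ := by
  have : ∀ i : Fin ℓ, z i ≠ blkCompl z i := fun i => (dnaCompl_ne (z i)).symm
  simp only [hammingDist]
  rw [Finset.filter_true_of_mem (fun i _ => this i), Finset.card_univ, Fintype.card_fin]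

/-- If binary strings `a` and `b` differ exactly in the two positions `i < j`
(0-indexed, `j < n`), then their block encodings `u`, `v` satisfy `v_k = u_k`
for `k < i` and for `k ≥ j`, and `v_k = u_k^c` for `i ≤ k < j`; hence the
Hamming distance of the concatenated DNA strings equals `ℓ·(j − i)`. -/
theorem enc_double_flip {ℓ n : ℕ} (hℓ : 0 < ℓ) (x y : Fin ℓ → Fin 4)
    (hxy : x ≠ y) (hxyc : x ≠ blkCompl y)
    (a b : ℕ → Bool) (i j : ℕ) (hij : i < j) (hj : j < n)
    (hflipi : b i = !(a i)) (hflipj : b j = !(a j))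
    (hsame : ∀ k, k ≠ i → k ≠ j → b k = a k) :
    (∀ k < i, enc x y b k = enc x y a k) ∧
    (∀ k, j ≤ k → enc x y b k = enc x y a k) ∧
    (∀ k, i ≤ k → k < j → enc x y b k = blkCompl (enc x y a k)) ∧
    ∑ k ∈ Finset.range n, hammingDist (enc x y a k) (enc x y b k) = ℓ * (j - i) := by
  -- part 1 : before i, encodings agree
  have hpre : ∀ k < i, enc x y b k = enc x y a k := by
    intro k
    induction k with
    | zero =>
      intro hk
      have h0 : b 0 = a 0 :=
        hsame 0 (Nat.ne_of_lt hk) (Nat.ne_of_lt (lt_trans hk hij))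
      simp [enc, h0]
    | succ k ih =>
      intro hk
      have hk' : k < i := Nat.lt_of_succ_lt hk
      have hb : b (k+1) = a (k+1) :=
        hsame (k+1) (Nat.ne_of_lt hk) (Nat.ne_of_lt (lt_trans hk hij))
      show fmap x y (enc x y b k) (b (k+1)) = fmap x y (enc x y a k) (a (k+1))
      rw [ih hk', hb]
  -- part 2 : between i and j, encodings are complements
  have hmid : ∀ k, i ≤ k → k < j → enc x y b k = blkCompl (enc x y a k) := by
    intro k
    induction k with
    | zero =>
      intro h1 _
      have hi0 : i = 0 := Nat.le_zero.mp h1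
      have hb : b 0 = !(a 0) := by rw [← hi0]; exact hflipi
      cases h : a 0 <;> simp [enc, hb, h, blkCompl_invol]
    | succ k ih =>
      intro h1 h2
      show fmap x y (enc x y b k) (b (k+1)) = blkCompl (fmap x y (enc x y a k) (a (k+1)))
      rcases Nat.lt_or_ge k i with hcase | hcase
      · -- i = k + 1 : the first flipped position
        have hik : i = k + 1 := le_antisymm h1 hcase
        have hb : b (k+1) = !(a (k+1)) := by rw [← hik]; exact hflipi
        rw [hpre k hcase, hb, fmap_not]
      · -- i ≤ k : inside the flipped range
        have hkj : k < j := Nat.lt_of_succ_lt h2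
        have hb : b (k+1) = a (k+1) := by
          refine hsame (k+1) ?_ (Nat.ne_of_lt h2)
          exact fun h => Nat.lt_irrefl k (Nat.lt_of_lt_of_le (h ▸ Nat.lt_succ_self k) hcase)
        rw [ih hcase hkj, hb,
          fmap_compl hℓ x y _ hxy hxyc (enc_mem x y a k) (a (k+1))]
  -- part 3 : from j on, encodings agree again
  have hpost : ∀ k, j ≤ k → enc x y b k = enc x y a k := by
    intro k
    induction k with
    | zero => intro h; exact absurd (Nat.lt_of_lt_of_le hij h) (Nat.not_lt_zero i)
    | succ k ih =>
      intro h1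
      show fmap x y (enc x y b k) (b (k+1)) = fmap x y (enc x y a k) (a (k+1))
      rcases Nat.lt_or_ge k j with hcase | hcase
      · -- j = k + 1 : the second flipped position
        have hjk : j = k + 1 := le_antisymm h1 hcase
        have hb : b (k+1) = !(a (k+1)) := by rw [← hjk]; exact hflipj
        have hik : i ≤ k := by omega
        rw [hmid k hik hcase, hb, fmap_not,
          fmap_compl hℓ x y _ hxy hxyc (enc_mem x y a k) (a (k+1)), blkCompl_invol]
      · have hb : b (k+1) = a (k+1) := by
          refine hsame (k+1) ?_ ?_
          · exact fun h => Nat.lt_irrefl k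
              (Nat.lt_of_lt_of_le (h ▸ Nat.lt_succ_self k) (le_trans (le_of_lt hij) hcase))
          · exact fun h => Nat.lt_irrefl k (Nat.lt_of_lt_of_le (h ▸ Nat.lt_succ_self k) hcase)
        rw [ih hcase, hb]
  refine ⟨hpre, hpost, hmid, ?_⟩
  -- the Hamming distance computation
  have hsub : Finset.Ico i j ⊆ Finset.range n := by
    intro k hk
    rw [Finset.mem_Ico] at hk
    exact Finset.mem_range.mpr (lt_trans hk.2 hj)
  have hzero : ∀ k ∈ Finset.range n, k ∉ Finset.Ico i j →
      hammingDist (enc x y a k) (enc x y b k) = 0 := by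
    intro k _ hk
    rw [Finset.mem_Ico, not_and_or, not_le, not_lt] at hk
    rcases hk with hk | hk
    · rw [hpre k hk, hammingDist_self]
    · rw [hpost k hk, hammingDist_self]
  rw [← Finset.sum_subset hsub hzero]
  have hterm : ∀ k ∈ Finset.Ico i j, hammingDist (enc x y a k) (enc x y b k) = ℓ := by
    intro k hk
    rw [Finset.mem_Ico] at hk
    rw [hmid k hk.1 hk.2, ham_compl]
  rw [Finset.sum_congr rfl hterm, Finset.sum_const, Nat.card_Ico, smul_eq_mul, mul_comm]
end

section
/- For binary vectors a, b of length n, the function d(a,b) defined from the support set S (the positions where a and b differ, augmented by n+1 if the Hamming distance is odd) via d(a,b) = ℓ·Σ_{i=1}^{|S|/2}(s_{2i} − s_{2i−1}) is a metric on {0,1}^n. -/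
/-- The alternating gap sum `Σ (s_{2i} − s_{2i−1})` of a (sorted) list
`s_1, s_2, s_3, s_4, …`, pairing consecutive elements. -/
def pairGapSum : List ℕ → ℕ
  | p :: q :: rest => (q - p) + pairGapSum rest
  | _ => 0

/-- The support set of a pair of binary strings: the (1-indexed) positions
where they differ, augmented by `n + 1` when that number is odd. -/
def supportSet {n : ℕ} (a b : Fin n → Bool) : Finset ℕ :=
  let P : Finset ℕ :=
    (Finset.univ.filter (fun i : Fin n => a i ≠ b i)).image (fun i : Fin n => (i : ℕ) + 1)
  if Even P.card then P else insert (n + 1) P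

/-- The gap-sum distance `d(a,b) = ℓ · Σ (s_{2i} − s_{2i−1})` over the sorted
(odd-augmented) support set. -/
def gapDist (ℓ : ℕ) {n : ℕ} (a b : Fin n → Bool) : ℕ :=
  ℓ * pairGapSum ((supportSet a b).sort (· ≤ ·))

/-!
Encode `a` by its prefix parities `π_a(t) = a_1 + ⋯ + a_t` in `ZMod 2`, `t = 0, …, n`.
For `t ≤ n` the number of elements of the support set that are `≤ t` is the number of
differences among the first `t` coordinates, whose parity is `π_a(t) - π_b(t)`. A sorted list
`s_1 ≤ s_2 ≤ ⋯` of even length has `Σ (s_{2i} - s_{2i-1})` equal to the number of `t` for which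
an odd number of the `s_j` are `≤ t`. Hence `d(a, b) = ℓ · hammingDist π_a π_b`, and since
`a ↦ π_a` is injective, `d` is `ℓ` times the Hamming metric pulled back along an injection.
-/

open Finset

theorem pairGapSum_eq_card_odd_countP :
    ∀ {l : List ℕ}, l.Pairwise (· ≤ ·) → Even l.length → ∀ {N : ℕ}, (∀ x ∈ l, x ≤ N) →
      pairGapSum l = #{t ∈ range N | Odd (l.countP (· ≤ t))}
  | [], _, _, _, _ => by simp [pairGapSum]
  | [_], _, he, _, _ => by simp at he
  | p :: q :: rest, hl, he, N, hN => by
    have hpq : p ≤ q := List.rel_of_pairwise_cons hl (by simp)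
    have hq : ∀ x ∈ rest, q ≤ x := fun x hx => List.rel_of_pairwise_cons hl.of_cons hx
    have hrest_zero : ∀ t < q, rest.countP (· ≤ t) = 0 := fun t ht =>
      List.countP_eq_zero.2 fun x hx => by simpa using ht.trans_le (hq x hx)
    have hodd : ∀ t, Odd ((p :: q :: rest).countP (· ≤ t)) ↔
        t ∈ Ico p q ∨ Odd (rest.countP (· ≤ t)) := by
      intro t
      rcases lt_or_ge t q with htq | hqt
      · by_cases hpt : p ≤ t <;> simp [hrest_zero t htq, htq, htq.not_ge, hpt]
      · simp [hqt, hpq.trans hqt, hqt.not_gt, parity_simps]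
    have hdisj : Disjoint (Ico p q) {t ∈ range N | Odd (rest.countP (· ≤ t))} := by
      refine disjoint_left.2 fun t ht ht' => ?_
      rw [mem_filter, hrest_zero t (mem_Ico.1 ht).2] at ht'
      exact Nat.not_odd_zero ht'.2
    have hIco : Ico p q ⊆ range N := fun t ht =>
      mem_range.2 ((mem_Ico.1 ht).2.trans_le (hN q (by simp)))
    have he' : Even rest.length := by simpa [Nat.even_add_one, parity_simps] using he
    have hN' : ∀ x ∈ rest, x ≤ N := fun x hx => hN x (by simp [hx])
    rw [pairGapSum, pairGapSum_eq_card_odd_countP hl.of_cons.of_cons he' hN',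
      filter_congr fun t _ => hodd t, filter_or, filter_mem_eq_inter, inter_eq_right.2 hIco,
      card_union_of_disjoint hdisj, Nat.card_Ico]

theorem pairGapSum_sort_eq_card {s : Finset ℕ} (hs : Even #s) {N : ℕ} (hN : ∀ x ∈ s, x ≤ N) :
    pairGapSum (s.sort (· ≤ ·)) = #{t ∈ range N | Odd #{x ∈ s | x ≤ t}} := by
  have hcount (t : ℕ) : (s.sort (· ≤ ·)).countP (· ≤ t) = #{x ∈ s | x ≤ t} := by
    rw [← Multiset.coe_countP, sort_eq, Multiset.countP_eq_card_filter, card, filter_val]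
  simp_rw [← hcount]
  exact pairGapSum_eq_card_odd_countP (pairwise_sort _ _) (by rwa [length_sort])
    fun x hx => hN x ((mem_sort _).1 hx)

section supportSet

variable {n : ℕ} (a b : Fin n → Bool)

def diffPositions : Finset ℕ :=
  image (fun i : Fin n => (i : ℕ) + 1) {i | a i ≠ b i}

theorem supportSet_eq : supportSet a b =
    if Even #(diffPositions a b) then diffPositions a b else insert (n + 1) (diffPositions a b) :=
  rfl

theorem le_of_mem_diffPositions {x : ℕ} (hx : x ∈ diffPositions a b) : x ≤ n := by
  obtain ⟨i, -, rfl⟩ := mem_image.1 hx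
  exact i.isLt

theorem supportSet_card_even : Even #(supportSet a b) := by
  rw [supportSet_eq]
  split_ifs with h
  · exact h
  · rw [card_insert_of_notMem fun hn => (le_of_mem_diffPositions a b hn).not_gt n.lt_succ_self,
      Nat.even_add_one]
    exact h

theorem le_of_mem_supportSet {x : ℕ} (hx : x ∈ supportSet a b) : x ≤ n + 1 := by
  rw [supportSet_eq] at hx
  split_ifs at hx
  · exact (le_of_mem_diffPositions a b hx).trans n.le_succ
  · rcases mem_insert.1 hx with rfl | hx
    · rfl
    · exact (le_of_mem_diffPositions a b hx).trans n.le_succ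

theorem card_filter_supportSet_le {t : ℕ} (ht : t ≤ n) :
    #{x ∈ supportSet a b | x ≤ t} = #{i | a i ≠ b i ∧ (i : ℕ) < t} := by
  have hP : #{x ∈ diffPositions a b | x ≤ t} = #{i | a i ≠ b i ∧ (i : ℕ) < t} := by
    rw [diffPositions, filter_image,
      card_image_of_injective _ fun i j h => Fin.ext (by simpa using h), filter_filter]
    simp only [Nat.add_one_le_iff]
  rw [supportSet_eq]
  split_ifs
  · exact hP
  · rwa [filter_insert, if_neg (by omega)]

end supportSet

def prefixParity {n : ℕ} (a : Fin n → Bool) (t : Fin (n + 1)) : ZMod 2 :=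
  ∑ i : Fin n with i.castSucc < t, ((a i).toNat : ZMod 2)

section prefixParity

variable {n : ℕ}

theorem prefixParity_sub_prefixParity (a b : Fin n → Bool) (t : Fin (n + 1)) :
    prefixParity a t - prefixParity b t = (#{i | a i ≠ b i ∧ i.castSucc < t} : ZMod 2) := by
  have hbit (x y : Bool) : (x.toNat : ZMod 2) - y.toNat = if x ≠ y then 1 else 0 := by
    decide +revert
  rw [prefixParity, prefixParity, ← sum_sub_distrib]
  simp only [hbit, sum_ite, sum_const_zero, add_zero, sum_const, nsmul_one, filter_filter, and_comm]

theorem prefixParity_ne_iff_odd (a b : Fin n → Bool) (t : Fin (n + 1)) :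
    prefixParity a t ≠ prefixParity b t ↔ Odd #{i | a i ≠ b i ∧ i.castSucc < t} := by
  rw [← sub_ne_zero, prefixParity_sub_prefixParity, ZMod.natCast_ne_zero_iff_odd]

theorem prefixParity_succ (a : Fin n → Bool) (i : Fin n) :
    prefixParity a i.succ = prefixParity a i.castSucc + (a i).toNat := by
  have hfilter : ({j | j.castSucc < i.succ} : Finset (Fin n)) =
      insert i ({j | j.castSucc < i.castSucc} : Finset (Fin n)) := by
    ext j
    simp only [mem_filter, mem_univ, true_and, mem_insert, Fin.castSucc_lt_succ_iff,
      Fin.castSucc_lt_castSucc_iff]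
    exact le_iff_eq_or_lt
  rw [prefixParity, prefixParity, hfilter, sum_insert (by simp), add_comm]

theorem prefixParity_injective : Function.Injective (prefixParity (n := n)) := by
  intro a b h
  funext i
  have hbit : ((a i).toNat : ZMod 2) = (b i).toNat := by
    simpa [prefixParity_succ, h] using congr_fun h i.succ
  exact (by decide : Function.Injective fun x : Bool => (x.toNat : ZMod 2)) hbit

end prefixParity

theorem gapDist_eq_mul_hammingDist (ℓ : ℕ) {n : ℕ} (a b : Fin n → Bool) :
    gapDist ℓ a b = ℓ * hammingDist (prefixParity a) (prefixParity b) := by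
  rw [gapDist, hammingDist,
    pairGapSum_sort_eq_card (supportSet_card_even a b) fun _ => le_of_mem_supportSet a b]
  congr 1
  have hcount (t : Fin (n + 1)) :
      #{i | a i ≠ b i ∧ i.castSucc < t} = #{x ∈ supportSet a b | x ≤ (t : ℕ)} := by
    simp_rw [card_filter_supportSet_le a b (Nat.lt_succ_iff.1 t.isLt), Fin.lt_def, Fin.val_castSucc]
  simp_rw [prefixParity_ne_iff_odd, hcount, card_filter]
  exact (Fin.sum_univ_eq_sum_range _ _).symm

/-- The gap-sum distance is a metric on `{0,1}^n`: it vanishes exactly on the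
diagonal, is symmetric, and satisfies the triangle inequality. -/
theorem gapDist_is_metric (ℓ n : ℕ) (hℓ : 0 < ℓ) :
    (∀ a b : Fin n → Bool, gapDist ℓ a b = 0 ↔ a = b) ∧
    (∀ a b : Fin n → Bool, gapDist ℓ a b = gapDist ℓ b a) ∧
    (∀ a b c : Fin n → Bool, gapDist ℓ a c ≤ gapDist ℓ a b + gapDist ℓ b c) := by
  simp only [gapDist_eq_mul_hammingDist]
  refine ⟨fun a b => ?_, fun a b => by rw [hammingDist_comm], fun a b c => ?_⟩
  · rw [mul_eq_zero, hammingDist_eq_zero, prefixParity_injective.eq_iff]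
    simp [hℓ.ne']
  · rw [← mul_add]
    exact Nat.mul_le_mul_left ℓ (hammingDist_triangle _ _ _)
end
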